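/- For every real c > 0 there exists an integer K such that for every integer k ≥ K, all nonnegative integers k₀, k₁ with k₀ + k₁ ≤ k, every real 0 ≤ β ≤ 1, and n = ⌈c·k³⌉, there exists an (n, k₀, k₁, 1/√k, β)-mapping family of size at most 8 · binom(k₁, ⌈β·k₁⌉)⁻¹ · (√k)^{⌈β·k₁⌉} · e^{(k₀+k₁)/√k} · k · ln(c·k). -/

import Mathlib

open Finset

/-- An `(n,k₀,k₁,α,β)`-mapping family: every function maps exactly `⌈α·n⌉` elements
to `1`, and for all disjoint `S₀, S₁ ⊆ [n]` with `|S₀| = k₀`, `|S₁| = k₁` some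
function maps all of `S₀` to `0` and exactly `⌈β·k₁⌉` elements of `S₁` to `1`. -/
def IsMappingFamily (n k₀ k₁ : ℕ) (α β : ℝ) (F : Finset (Fin n → Fin 2)) : Prop :=
  (∀ f ∈ F, (Finset.univ.filter fun x => f x = 1).card = ⌈α * (n : ℝ)⌉₊) ∧
  ∀ S₀ S₁ : Finset (Fin n), Disjoint S₀ S₁ → S₀.card = k₀ → S₁.card = k₁ →
    ∃ f ∈ F, (∀ x ∈ S₀, f x = 0) ∧
      (S₁.filter fun x => f x = 1).card = ⌈β * (k₁ : ℝ)⌉₊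

/-!
Take the indicator functions of `N` independent uniformly random `m`-subsets of `[n]`,
`m = ⌈n/√k⌉`. One random set serves a fixed pair `(S₀, S₁)` with probability
`p = binom(k₁,t)·binom(n-k₀-k₁, m-t) / binom(n,m)`, `t = ⌈β·k₁⌉`, and there are at most
`n^(k₀+k₁)` pairs, so by the union bound `N > (k₀+k₁)·ln n / p` sets serve all of them.
Comparing descending factorials gives `1/p ≤ binom(k₁,t)⁻¹·(√k)^t·e^{(k₀+k₁)/√k + 3/4}`
once `n ≥ 200 k²`, and `(k·ln n + 1)·e^{3/4} ≤ 8·k·ln(c·k)` for `n = ⌈c·k³⌉` and large `k`.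
-/

open Real Filter
open scoped Nat

theorem exists_hitting_subset {X Y : Type*} [DecidableEq X] {Ω : Finset X} (hΩ : Ω.Nonempty)
    (P : Finset Y) (G : Y → Finset X) {p : ℝ} (hGΩ : ∀ y ∈ P, G y ⊆ Ω)
    (hG : ∀ y ∈ P, p * #Ω ≤ #(G y)) {N : ℕ} (hN : (#P : ℝ) < exp (p * N)) :
    ∃ F ⊆ Ω, #F ≤ N ∧ ∀ y ∈ P, ∃ x ∈ F, x ∈ G y := by
  -- union bound over the `N`-tuples of elements of `Ω` that miss some `G y`
  set tuples := Fintype.piFinset fun _ : Fin N => Ω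
  set missing := P.biUnion fun y => Fintype.piFinset fun _ : Fin N => Ω \ G y
  have hmiss (y) (hy : y ∈ P) :
      (#(Fintype.piFinset fun _ : Fin N => Ω \ G y) : ℝ) ≤ exp (-p * N) * #tuples := by
    have h1p : (#(Ω \ G y) : ℝ) ≤ (1 - p) * #Ω := by
      rw [card_sdiff_of_subset (hGΩ y hy), Nat.cast_sub (card_le_card (hGΩ y hy))]
      linarith [hG y hy]
    simp only [tuples, Fintype.card_piFinset_const, Nat.cast_pow]
    calc (#(Ω \ G y) : ℝ) ^ N ≤ ((1 - p) * #Ω) ^ N := by gcongr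
      _ ≤ (exp (-p) * #Ω) ^ N := by
          have : 0 ≤ (1 - p) * #Ω := (Nat.cast_nonneg _).trans h1p
          gcongr; linarith [add_one_le_exp (-p)]
      _ = exp (-p * N) * #Ω ^ N := by rw [mul_pow, ← exp_nat_mul]; ring_nf
  have hlt : (#missing : ℝ) < #tuples := by
    have htuples : (0 : ℝ) < #tuples := by
      simp only [tuples, Fintype.card_piFinset_const]; exact_mod_cast pow_pos hΩ.card_pos N
    calc (#missing : ℝ) ≤ ∑ y ∈ P, (#(Fintype.piFinset fun _ : Fin N => Ω \ G y) : ℝ) := by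
          exact_mod_cast card_biUnion_le
      _ ≤ ∑ y ∈ P, exp (-p * N) * #tuples := sum_le_sum hmiss
      _ = #P / exp (p * N) * #tuples := by
          rw [sum_const, nsmul_eq_mul, neg_mul, exp_neg]; ring
      _ < #tuples := by
          rwa [mul_lt_iff_lt_one_left htuples, div_lt_one (exp_pos _)]
  obtain ⟨g, hg, hgmiss⟩ := exists_mem_notMem_of_card_lt_card (by exact_mod_cast hlt)
  refine ⟨univ.image g, ?_, card_image_le.trans (by simp), fun y hy => ?_⟩
  · simpa [image_subset_iff, tuples] using hg
  · simp only [missing, mem_biUnion, not_exists, not_and, Fintype.mem_piFinset, not_forall]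
      at hgmiss
    obtain ⟨i, hi⟩ := hgmiss y hy
    exact ⟨g i, mem_image_of_mem g (mem_univ i),
      by simpa [Fintype.mem_piFinset.1 hg i] using hi⟩

theorem card_powersetCard_filter_card_inter {α : Type*} [DecidableEq α] {U A : Finset α}
    (hAU : A ⊆ U) {m t : ℕ} (htm : t ≤ m) :
    #{T ∈ U.powersetCard m | #(A ∩ T) = t} = (#A).choose t * (#(U \ A)).choose (m - t) := by
  rw [← card_powersetCard, ← card_powersetCard, ← card_product]
  refine card_nbij' (fun T => (A ∩ T, T \ A)) (fun q => q.1 ∪ q.2) ?_ ?_ ?_ ?_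
  · intro T hT
    simp only [mem_coe, mem_filter, mem_powersetCard] at hT
    simp only [mem_coe, mem_product, mem_powersetCard]
    refine ⟨⟨inter_subset_left, hT.2⟩, sdiff_subset_sdiff hT.1.1 le_rfl, ?_⟩
    have := card_sdiff_add_card_inter T A
    rw [inter_comm, hT.2, hT.1.2] at this
    omega
  · rintro ⟨B, C⟩ hq
    simp only [mem_coe, mem_product, mem_powersetCard] at hq
    obtain ⟨⟨hBA, hB⟩, hCUA, hC⟩ := hq
    have hCA : Disjoint C A := (subset_sdiff.1 hCUA).2
    have hAC : A ∩ (B ∪ C) = B := by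
      rw [inter_union_distrib_left, inter_eq_right.2 hBA,
        disjoint_iff_inter_eq_empty.1 hCA.symm, union_empty]
    simp only [mem_coe, mem_filter, mem_powersetCard, hAC, hB]
    refine ⟨⟨union_subset (hBA.trans hAU) (hCUA.trans sdiff_subset), ?_⟩, trivial⟩
    rw [card_union_of_disjoint (disjoint_of_subset_left hBA hCA.symm), hB, hC]
    omega
  · intro T _
    simp only; rw [inter_comm, union_comm, sdiff_union_inter]
  · rintro ⟨B, C⟩ hq
    simp only [mem_coe, mem_product, mem_powersetCard] at hq
    obtain ⟨⟨hBA, -⟩, hCUA, -⟩ := hq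
    have hCA : Disjoint C A := (subset_sdiff.1 hCUA).2
    simp only [Prod.mk.injEq]
    constructor
    · rw [inter_union_distrib_left, inter_eq_right.2 hBA,
        disjoint_iff_inter_eq_empty.1 hCA.symm, union_empty]
    · rw [union_sdiff_distrib, sdiff_eq_empty_iff_subset.2 hBA, hCA.sdiff_eq_left, empty_union]

theorem choose_mul_choose_le_add_choose (a b i j : ℕ) :
    a.choose i * b.choose j ≤ (a + b).choose (i + j) := by
  rw [Nat.add_choose_eq]
  exact single_le_sum (f := fun ij : ℕ × ℕ => a.choose ij.1 * b.choose ij.2)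
    (fun _ _ => Nat.zero_le _) (mem_antidiagonal.2 (rfl : (i, j).1 + (i, j).2 = i + j))

theorem choose_mul_descFactorial_mul_descFactorial (t a u b : ℕ) :
    (t + a + (u + b)).choose (t + a) * (t + a).descFactorial t * (u + b).descFactorial u =
      (a + b).choose a * (t + a + (u + b)).descFactorial (t + u) := by
  have hdesc {n k : ℕ} (h : k ≤ n) : (n.descFactorial k : ℚ) = n ! / (n - k)! := by
    rw [eq_div_iff (by positivity), ← Nat.cast_mul, mul_comm, Nat.factorial_mul_descFactorial h]
  rw [← Nat.cast_inj (R := ℚ)]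
  push_cast
  rw [Nat.cast_choose ℚ (by omega), Nat.cast_choose ℚ (by omega), hdesc (by omega),
    hdesc (by omega), hdesc (by omega), show t + a + (u + b) - (t + a) = u + b by omega,
    show t + a - t = a by omega, show u + b - u = b by omega, show a + b - a = b by omega,
    show t + a + (u + b) - (t + u) = a + b by omega]
  field_simp

theorem pow_le_descFactorial_of_le {n k : ℕ} {a : ℝ} (ha₀ : 0 ≤ a) (ha : a ≤ n + 1 - k)
    (hk : k ≤ n + 1) : a ^ k ≤ n.descFactorial k :=
  calc a ^ k ≤ ((n + 1 - k : ℕ) : ℝ) ^ k := by gcongr; push_cast [hk]; exact ha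
    _ ≤ n.descFactorial k := by exact_mod_cast Nat.pow_sub_le_descFactorial n k

theorem choose_mul_pow_mul_pow_le {n m t u : ℕ} (htm : t ≤ m) (hu : m + u ≤ n) {a b : ℝ}
    (ha₀ : 0 ≤ a) (ha : a ≤ m + 1 - t) (hb₀ : 0 ≤ b) (hb : b ≤ n - m + 1 - u) :
    (n.choose m : ℝ) * a ^ t * b ^ u ≤ (n - (t + u)).choose (m - t) * (n : ℝ) ^ (t + u) := by
  obtain ⟨a', rfl⟩ := Nat.exists_eq_add_of_le htm
  obtain ⟨b', rfl⟩ := Nat.exists_eq_add_of_le hu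
  have hid := choose_mul_descFactorial_mul_descFactorial t a' u b'
  rw [← add_assoc] at hid
  rw [show t + a' + u + b' - (t + u) = a' + b' by omega, Nat.add_sub_cancel_left]
  calc (((t + a' + u + b').choose (t + a')) : ℝ) * a ^ t * b ^ u
      ≤ (t + a' + u + b').choose (t + a') * (t + a').descFactorial t *
          (u + b').descFactorial u := by
        gcongr
        · exact pow_le_descFactorial_of_le ha₀ (by push_cast at ha ⊢; linarith) (by omega)
        · exact pow_le_descFactorial_of_le hb₀ (by push_cast at hb ⊢; linarith) (by omega)
    _ = (a' + b').choose a' * (t + a' + u + b').descFactorial (t + u) := by exact_mod_cast hid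
    _ ≤ (a' + b').choose a' * (t + a' + u + b' : ℕ) ^ (t + u) := by
        gcongr; exact_mod_cast Nat.descFactorial_le_pow _ _

/-- The probability that a uniformly random `m`-subset of `Fin n` avoids a fixed `k₀`-set and
meets a disjoint fixed `k₁`-set in exactly `t` points. -/
noncomputable def servingProb (n m k₀ k₁ t : ℕ) : ℝ :=
  k₁.choose t * (n - (k₀ + k₁)).choose (m - t) / n.choose m

theorem servingProb_pos {n m k₀ k₁ t : ℕ} (htk : t ≤ k₁) (hmn : m ≤ n)
    (hmt : m - t ≤ n - (k₀ + k₁)) : 0 < servingProb n m k₀ k₁ t := by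
  have := Nat.choose_pos htk
  have := Nat.choose_pos hmt
  have := Nat.choose_pos hmn
  unfold servingProb; positivity

theorem servingProb_le_one {n m k₀ k₁ t : ℕ} (htm : t ≤ m) (hs : k₀ + k₁ ≤ n) :
    servingProb n m k₀ k₁ t ≤ 1 := by
  refine div_le_one_of_le₀ ?_ (Nat.cast_nonneg _)
  have := (choose_mul_choose_le_add_choose k₁ (n - (k₀ + k₁)) t (m - t)).trans
    (Nat.choose_le_choose (t + (m - t)) (by omega : k₁ + (n - (k₀ + k₁)) ≤ n))
  rw [Nat.add_sub_cancel' htm] at this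
  exact_mod_cast this

theorem filter_ite_eq_one {n : ℕ} (s T : Finset (Fin n)) :
    {x ∈ s | (if x ∈ T then 1 else 0 : Fin 2) = 1} = s ∩ T := by
  ext x; by_cases hx : x ∈ T <;> simp [hx]

theorem card_filter_disjoint_pairs_le (n k₀ k₁ : ℕ) :
    #{q ∈ (univ : Finset (Fin n)).powersetCard k₀ ×ˢ univ.powersetCard k₁ | Disjoint q.1 q.2}
      ≤ n ^ (k₀ + k₁) := by
  refine (card_filter_le _ _).trans ?_
  rw [card_product, card_powersetCard, card_powersetCard, card_univ, Fintype.card_fin, pow_add]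
  exact Nat.mul_le_mul (Nat.choose_le_pow _ _) (Nat.choose_le_pow _ _)

theorem card_serving_sets {n m t : ℕ} {S₀ S₁ : Finset (Fin n)} (hd : Disjoint S₀ S₁)
    (htm : t ≤ m) :
    #{T ∈ (univ \ S₀).powersetCard m | #(S₁ ∩ T) = t} =
      (#S₁).choose t * (n - (#S₀ + #S₁)).choose (m - t) := by
  rw [card_powersetCard_filter_card_inter (subset_sdiff.2 ⟨subset_univ _, hd.symm⟩) htm,
    sdiff_sdiff_left, sup_eq_union, card_sdiff_of_subset (subset_univ _),
    card_union_of_disjoint hd, card_univ, Fintype.card_fin]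

theorem exists_isMappingFamily_card_le {n m t k₀ k₁ N : ℕ} {α β : ℝ} (hm : ⌈α * n⌉₊ = m)
    (ht : ⌈β * k₁⌉₊ = t) (hmn : m ≤ n) (htm : t ≤ m)
    (hN : (n : ℝ) ^ (k₀ + k₁) < exp (servingProb n m k₀ k₁ t * N)) :
    ∃ F : Finset (Fin n → Fin 2), IsMappingFamily n k₀ k₁ α β F ∧ #F ≤ N := by
  set P : Finset (Finset (Fin n) × Finset (Fin n)) :=
    {q ∈ univ.powersetCard k₀ ×ˢ univ.powersetCard k₁ | Disjoint q.1 q.2}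
  have hmemP {S₀ S₁ : Finset (Fin n)} :
      (S₀, S₁) ∈ P ↔ Disjoint S₀ S₁ ∧ #S₀ = k₀ ∧ #S₁ = k₁ := by
    simp [P, mem_powersetCard]; tauto
  set G := fun q : Finset (Fin n) × Finset (Fin n) =>
    {T ∈ (univ \ q.1).powersetCard m | #(q.2 ∩ T) = t}
  set Ω := (univ : Finset (Fin n)).powersetCard m
  have hGΩ (q) (_ : q ∈ P) : G q ⊆ Ω :=
    (filter_subset _ _).trans (powersetCard_mono (subset_univ _))
  have hG : ∀ q ∈ P, servingProb n m k₀ k₁ t * #Ω ≤ #(G q) := by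
    rintro ⟨S₀, S₁⟩ hq
    obtain ⟨hd, rfl, rfl⟩ := hmemP.1 hq
    rw [card_serving_sets hd htm, servingProb, card_powersetCard, card_univ, Fintype.card_fin,
      div_mul_cancel₀ _ (by exact_mod_cast (Nat.choose_pos hmn).ne')]
    push_cast; rfl
  have hP : (#P : ℝ) < exp (servingProb n m k₀ k₁ t * N) :=
    lt_of_le_of_lt (by exact_mod_cast card_filter_disjoint_pairs_le n k₀ k₁) hN
  obtain ⟨Ts, hTs, hcard, hhit⟩ :=
    exists_hitting_subset (powersetCard_nonempty.2 (by simpa)) P G hGΩ hG hP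
  refine ⟨Ts.image fun T x => if x ∈ T then 1 else 0, ⟨?_, ?_⟩, card_image_le.trans hcard⟩
  · simp only [mem_image, forall_exists_index, and_imp, forall_apply_eq_imp_iff₂,
      filter_ite_eq_one, univ_inter]
    intro T hT
    rw [(mem_powersetCard.1 (hTs hT)).2, hm]
  · intro S₀ S₁ hd h₀ h₁
    obtain ⟨T, hT, hTG⟩ := hhit (S₀, S₁) (hmemP.2 ⟨hd, h₀, h₁⟩)
    simp only [G, mem_filter, mem_powersetCard, subset_sdiff] at hTG
    refine ⟨_, mem_image_of_mem _ hT, fun x hx => ?_, by rw [filter_ite_eq_one, hTG.2, ht]⟩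
    simp [disjoint_left.1 hTG.1.1.2.symm hx]

-- The constant `3/5` (not the easier `1`) keeps the total loss `k·(3/5)·x² ≈ 3/5` below `3/4`.
theorem one_le_one_sub_mul_exp {x : ℝ} (h₀ : 0 ≤ x) (h₆ : x ≤ 1 / 6) :
    1 ≤ (1 - x) * exp (x + 3 / 5 * x ^ 2) := by
  have h₁ : 1 + x + x ^ 2 / 2 ≤ exp x := quadratic_le_exp_of_nonneg h₀
  have h₂ : 1 + 3 / 5 * x ^ 2 ≤ exp (3 / 5 * x ^ 2) := by
    linarith [add_one_le_exp (3 / 5 * x ^ 2)]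
  have hx2 : x ^ 2 ≤ x / 6 := by nlinarith
  calc (1 : ℝ) ≤ (1 - x) * ((1 + x + x ^ 2 / 2) * (1 + 3 / 5 * x ^ 2)) := by
        nlinarith [mul_le_mul_of_nonneg_left hx2 h₀, mul_le_mul_of_nonneg_left hx2 (sq_nonneg x),
          pow_nonneg h₀ 3]
    _ ≤ (1 - x) * exp (x + 3 / 5 * x ^ 2) := by
        rw [exp_add]; gcongr; linarith

theorem seven_le_sqrt {k : ℕ} (hk : 49 ≤ k) : 7 ≤ √(k : ℝ) :=
  (le_sqrt (by norm_num) (by positivity)).2 (by norm_cast)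

theorem le_and_add_le_of_near_div_sqrt {n k m : ℕ} (hk : 49 ≤ k) (hn : 200 * k ^ 2 ≤ n)
    (hm₁ : n / √k ≤ m) (hm₂ : m ≤ n / √k + 1) : k ≤ m ∧ m + k ≤ n := by
  have hr := seven_le_sqrt hk
  have hrk : √(k : ℝ) ^ 2 = k := sq_sqrt (Nat.cast_nonneg k)
  have hn' : 200 * (k : ℝ) ^ 2 ≤ n := by exact_mod_cast hn
  have hk' : (49 : ℝ) ≤ k := by exact_mod_cast hk
  have hn₀ : (0 : ℝ) < n := by nlinarith
  constructor
  · have : (k : ℝ) ≤ n / √k := by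
      rw [le_div_iff₀ (by positivity)]; nlinarith
    exact_mod_cast this.trans hm₁
  · have : (n : ℝ) / √k ≤ n / 7 := div_le_div_of_nonneg_left hn₀.le (by norm_num) hr
    have : (m : ℝ) + k ≤ n := by nlinarith
    exact_mod_cast this

theorem one_le_one_sub_pow_mul_exp {k s n : ℕ} (hk : 49 ≤ k) (hn : 200 * k ^ 2 ≤ n)
    (hsk : s ≤ k) : 1 ≤ (1 - (1 / √k + k / n)) ^ s * exp (s / √k + 3 / 4) := by
  set r := √(k : ℝ)
  set x := 1 / r + k / n
  have hr : 7 ≤ r := seven_le_sqrt hk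
  have hrk : r ^ 2 = k := sq_sqrt (Nat.cast_nonneg k)
  have hk' : (49 : ℝ) ≤ k := by exact_mod_cast hk
  have hn' : 200 * (k : ℝ) ^ 2 ≤ n := by exact_mod_cast hn
  have hs' : (s : ℝ) ≤ k := by exact_mod_cast hsk
  have hkn : (k : ℝ) / n ≤ 1 / (200 * k) := by
    rw [div_le_div_iff₀ (by nlinarith) (by positivity)]; nlinarith
  have hx₀ : 0 ≤ x := by positivity
  have hxr : x * r ≤ 201 / 200 := by
    have : (k : ℝ) / n * r ≤ 1 / 200 := by
      calc (k : ℝ) / n * r ≤ 1 / (200 * k) * k := by gcongr; nlinarith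
        _ = 1 / 200 := by field_simp
    simp only [x, add_mul, one_div_mul_cancel (by positivity : r ≠ 0)]; linarith
  have hx₆ : x ≤ 1 / 6 := by nlinarith
  have hexp : s * (x + 3 / 5 * x ^ 2) ≤ s / r + 3 / 4 := by
    have h₁ : s * x ≤ s / r + 1 / 200 := by
      have : s * ((k : ℝ) / n) ≤ 1 / 200 := by
        calc s * ((k : ℝ) / n) ≤ k * (1 / (200 * k)) := by gcongr
          _ = 1 / 200 := by field_simp
      simp only [x, mul_add, mul_one_div]; linarith
    have h₂ : s * x ^ 2 ≤ (201 / 200) ^ 2 := by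
      calc s * x ^ 2 ≤ r ^ 2 * x ^ 2 := by rw [hrk]; gcongr
        _ = (x * r) ^ 2 := by ring
        _ ≤ (201 / 200) ^ 2 := by gcongr
    nlinarith
  have : 0 ≤ 1 - x := by linarith
  calc (1 : ℝ) ≤ ((1 - x) * exp (x + 3 / 5 * x ^ 2)) ^ s :=
        one_le_pow₀ (one_le_one_sub_mul_exp hx₀ hx₆)
    _ = (1 - x) ^ s * exp (s * (x + 3 / 5 * x ^ 2)) := by rw [mul_pow, ← exp_nat_mul]
    _ ≤ (1 - x) ^ s * exp (s / r + 3 / 4) := by gcongr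

theorem choose_le_choose_sub_mul_exp {n k m s t : ℕ} (hk : 49 ≤ k) (hn : 200 * k ^ 2 ≤ n)
    (hm₁ : n / √k ≤ m) (hm₂ : m ≤ n / √k + 1) (hts : t ≤ s) (hsk : s ≤ k) :
    (n.choose m : ℝ) ≤ (n - s).choose (m - t) * √k ^ t * exp (s / √k + 3 / 4) := by
  obtain ⟨hkm, hmk⟩ := le_and_add_le_of_near_div_sqrt hk hn hm₁ hm₂
  obtain ⟨u, rfl⟩ := Nat.exists_eq_add_of_le hts
  set r := √(k : ℝ)
  set x := 1 / r + k / n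
  have hr : 0 < r := by linarith [seven_le_sqrt hk]
  have hrk : r ^ 2 = k := sq_sqrt (Nat.cast_nonneg k)
  have hn' : 200 * (k : ℝ) ^ 2 ≤ n := by exact_mod_cast hn
  have hk' : (49 : ℝ) ≤ k := by exact_mod_cast hk
  have hmk' : (m : ℝ) + k ≤ n := by exact_mod_cast hmk
  have hs' : (t : ℝ) + u ≤ k := by exact_mod_cast hsk
  have hn₀ : (0 : ℝ) < n := by nlinarith
  have hnx : n * x = n / r + k := by simp only [x]; field_simp
  have hnrx : n / r * x = n / k + k / r := by simp only [x]; rw [← hrk]; field_simp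
  have hnk : (k : ℝ) ≤ n / k := by rw [le_div_iff₀ (by positivity)]; nlinarith
  have hx₁ : 0 ≤ 1 - x := by
    have : n * x ≤ n * 1 := by linarith
    linarith [le_of_mul_le_mul_left this hn₀]
  -- the `t` chosen points each cost at most `√k / (1 - x)`, the `u` avoided ones `1 / (1 - x)`
  have hcomb := choose_mul_pow_mul_pow_le (a := n / r * (1 - x)) (b := n * (1 - x))
    (by omega : t ≤ m) (by omega : m + u ≤ n) (by positivity)
    (by rw [mul_one_sub, hnrx]; linarith [div_nonneg (Nat.cast_nonneg k) hr.le])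
    (by positivity) (by rw [mul_one_sub, hnx]; linarith)
  calc (n.choose m : ℝ) ≤ n.choose m * ((1 - x) ^ (t + u) * exp ((t + u : ℕ) / r + 3 / 4)) :=
        le_mul_of_one_le_right (by positivity) (one_le_one_sub_pow_mul_exp hk hn hsk)
    _ = n.choose m * (n / r * (1 - x)) ^ t * (n * (1 - x)) ^ u * (r ^ t / n ^ (t + u)) *
          exp ((t + u : ℕ) / r + 3 / 4) := by
        rw [mul_pow, mul_pow, div_pow, pow_add, pow_add]; field_simp
    _ ≤ (n - (t + u)).choose (m - t) * n ^ (t + u) * (r ^ t / n ^ (t + u)) *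
          exp ((t + u : ℕ) / r + 3 / 4) := by gcongr
    _ = (n - (t + u)).choose (m - t) * r ^ t * exp ((t + u : ℕ) / r + 3 / 4) := by
        field_simp

theorem one_div_servingProb_le {n k m k₀ k₁ t : ℕ} (hk : 49 ≤ k) (hn : 200 * k ^ 2 ≤ n)
    (hm₁ : n / √k ≤ m) (hm₂ : m ≤ n / √k + 1) (htk : t ≤ k₁) (hs : k₀ + k₁ ≤ k) :
    1 / servingProb n m k₀ k₁ t ≤
      (k₁.choose t : ℝ)⁻¹ * √k ^ t * exp ((k₀ + k₁) / √k + 3 / 4) := by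
  obtain ⟨-, hmk⟩ := le_and_add_le_of_near_div_sqrt hk hn hm₁ hm₂
  have := Nat.choose_pos htk
  have := Nat.choose_pos (by omega : m - t ≤ n - (k₀ + k₁))
  rw [servingProb, one_div_div, div_le_iff₀ (by positivity)]
  refine (choose_le_choose_sub_mul_exp hk hn hm₁ hm₂ (htk.trans (Nat.le_add_left _ _))
    hs).trans_eq ?_
  push_cast; field_simp

theorem exists_nat_lt_mul_le_div {p L : ℝ} (hp₀ : 0 < p) (hp₁ : p ≤ 1) (hL : 0 ≤ L) :
    ∃ N : ℕ, L < p * N ∧ (N : ℝ) ≤ (L + 1) / p := by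
  refine ⟨⌊L / p⌋₊ + 1, ?_, ?_⟩
  · rw [← div_lt_iff₀' hp₀]; exact_mod_cast Nat.lt_floor_add_one _
  · rw [add_div]; push_cast
    gcongr
    · exact Nat.floor_le (by positivity)
    · exact one_le_one_div hp₀ hp₁

theorem exists_isMappingFamily_of_sq_le {n k k₀ k₁ : ℕ} {β : ℝ} (hk : 49 ≤ k)
    (hn : 200 * k ^ 2 ≤ n) (hs : k₀ + k₁ ≤ k) (hβ₁ : β ≤ 1) :
    ∃ F : Finset (Fin n → Fin 2), IsMappingFamily n k₀ k₁ (1 / √k) β F ∧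
      (#F : ℝ) ≤ (k * log n + 1) * ((k₁.choose ⌈β * k₁⌉₊ : ℝ)⁻¹ * √k ^ ⌈β * k₁⌉₊ *
        exp ((k₀ + k₁) / √k + 3 / 4)) := by
  set m := ⌈1 / √k * n⌉₊ with hm
  set t := ⌈β * k₁⌉₊ with ht
  have htk : t ≤ k₁ := Nat.ceil_le.2 (mul_le_of_le_one_left (Nat.cast_nonneg _) hβ₁)
  have hm₁ : n / √k ≤ m := by rw [← one_div_mul_eq_div]; exact Nat.le_ceil _
  have hm₂ : m ≤ n / √k + 1 := by
    rw [← one_div_mul_eq_div]; exact (Nat.ceil_lt_add_one (by positivity)).le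
  obtain ⟨hkm, hmk⟩ := le_and_add_le_of_near_div_sqrt hk hn hm₁ hm₂
  set p := servingProb n m k₀ k₁ t
  have hp₀ : 0 < p := servingProb_pos htk (by omega) (by omega)
  obtain ⟨N, hN, hNp⟩ := exists_nat_lt_mul_le_div (L := (k₀ + k₁ : ℕ) * log n) hp₀
    (servingProb_le_one (by omega) (by omega)) (by positivity)
  obtain ⟨F, hF, hFN⟩ := exists_isMappingFamily_card_le (N := N) hm.symm ht.symm (by omega)
    (by omega) (by rwa [← exp_log (Nat.cast_pos.2 (by omega)), ← exp_nat_mul, exp_lt_exp])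
  refine ⟨F, hF, ?_⟩
  calc (#F : ℝ) ≤ N := by exact_mod_cast hFN
    _ ≤ ((k₀ + k₁ : ℕ) * log n + 1) / p := hNp
    _ ≤ (k * log n + 1) * (1 / p) := by rw [← div_eq_mul_one_div]; gcongr
    _ ≤ _ := by gcongr; exact one_div_servingProb_le hk hn hm₁ hm₂ htk hs

theorem exp_three_quarters_le : exp (3 / 4) ≤ 2.2 := by
  have h₃ : exp 3 ≤ 2.2 ^ 4 := calc
    exp 3 = exp 1 ^ 3 := by rw [← exp_nat_mul]; norm_num
    _ ≤ 2.7182818286 ^ 3 := by gcongr; exact exp_one_lt_d9.le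
    _ ≤ 2.2 ^ 4 := by norm_num
  refine le_of_pow_le_pow_left₀ (by norm_num : (4 : ℕ) ≠ 0) (by norm_num) ?_
  rwa [← exp_nat_mul, show ((4 : ℕ) : ℝ) * (3 / 4) = 3 by norm_num]

theorem eventually_mul_log_add_one_mul_exp_le {c : ℝ} (hc : 0 < c) :
    ∀ᶠ k : ℕ in atTop,
      ((k : ℝ) * log (2 * c * k ^ 3) + 1) * exp (3 / 4) ≤ 8 * k * log (c * k) := by
  -- with `e^{3/4} ≤ 2.2` the claim reduces to `1.4·ln k + 5.8·ln c ≥ 2.2·ln 2 + 2.2/k`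
  filter_upwards [eventually_ge_atTop 1, (tendsto_log_atTop.comp
    tendsto_natCast_atTop_atTop).eventually_ge_atTop ((2.2 * log 2 + 2.2 - 5.8 * log c) / 1.4)]
    with k hk hA
  have hk' : (1 : ℝ) ≤ k := by exact_mod_cast hk
  have hA' : 2.2 * log 2 + 2.2 - 5.8 * log c ≤ 1.4 * log k := by
    rw [Function.comp_apply, div_le_iff₀ (by norm_num)] at hA; linarith
  rw [log_mul (by positivity) (by positivity), log_mul (by positivity) (by positivity),
    log_mul hc.ne' (by positivity), log_pow]
  have hlogk : 0 ≤ log k := log_nonneg hk'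
  have hlog2 : 0 ≤ log 2 := log_nonneg (by norm_num)
  have hlogck : 0 ≤ log c + log k := by
    rcases le_total 0 (log c) with h | h <;> linarith
  have hmain : ((k : ℝ) * (log 2 + log c + (3 : ℕ) * log k) + 1) * 2.2 ≤
      8 * k * (log c + log k) := by
    push_cast; nlinarith [mul_le_mul_of_nonneg_left hA' (by linarith : (0 : ℝ) ≤ k)]
  rcases le_total 0 ((k : ℝ) * (log 2 + log c + (3 : ℕ) * log k) + 1) with hX | hX
  · exact (mul_le_mul_of_nonneg_left exp_three_quarters_le hX).trans hmain
  · exact (mul_nonpos_of_nonpos_of_nonneg hX (exp_pos _).le).trans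
      (mul_nonneg (by positivity) hlogck)

/-- For every `c > 0` there is `K` such that for all `k ≥ K`, `k₀ + k₁ ≤ k`,
`0 ≤ β ≤ 1` and `n = ⌈c·k³⌉`, there is an `(n,k₀,k₁,1/√k,β)`-mapping family of size
at most `8·binom(k₁,⌈β·k₁⌉)⁻¹·(√k)^{⌈β·k₁⌉}·e^{(k₀+k₁)/√k}·k·ln(c·k)`. -/
theorem mapping_family_small_universe (c : ℝ) (hc : 0 < c) :
    ∃ K : ℕ, ∀ k : ℕ, K ≤ k → ∀ k₀ k₁ : ℕ, k₀ + k₁ ≤ k →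
      ∀ β : ℝ, 0 ≤ β → β ≤ 1 →
      ∃ F : Finset (Fin ⌈c * (k : ℝ) ^ 3⌉₊ → Fin 2),
        IsMappingFamily ⌈c * (k : ℝ) ^ 3⌉₊ k₀ k₁ (1 / Real.sqrt k) β F ∧
          (F.card : ℝ) ≤
            8 * ((k₁.choose ⌈β * (k₁ : ℝ)⌉₊ : ℝ))⁻¹ *
              Real.sqrt k ^ ⌈β * (k₁ : ℝ)⌉₊ *
              Real.exp (((k₀ : ℝ) + (k₁ : ℝ)) / Real.sqrt k) *
              (k : ℝ) * Real.log (c * (k : ℝ)) := by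
  obtain ⟨K, hK⟩ := eventually_atTop.1 ((eventually_ge_atTop 49).and
    (((tendsto_natCast_atTop_atTop.const_mul_atTop hc).eventually_ge_atTop 200).and
      (eventually_mul_log_add_one_mul_exp_le hc)))
  refine ⟨K, fun k hk k₀ k₁ hs β _ hβ₁ => ?_⟩
  obtain ⟨h49, hck, hlog⟩ := hK k hk
  set n := ⌈c * (k : ℝ) ^ 3⌉₊
  have hk₁ : (1 : ℝ) ≤ k := by exact_mod_cast (by omega : 1 ≤ k)
  have hck3 : 200 * (k : ℝ) ^ 2 ≤ c * k ^ 3 := by nlinarith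
  have hn : 200 * k ^ 2 ≤ n := by
    rw [← Nat.cast_le (α := ℝ)]; push_cast; exact hck3.trans (Nat.le_ceil _)
  have hlogn : log n ≤ log (2 * c * k ^ 3) :=
    log_le_log (by nlinarith [Nat.le_ceil (c * (k : ℝ) ^ 3)])
      (by nlinarith [Nat.ceil_lt_add_one (by positivity : 0 ≤ c * (k : ℝ) ^ 3)])
  obtain ⟨F, hF, hcard⟩ := exists_isMappingFamily_of_sq_le h49 hn hs hβ₁
  refine ⟨F, hF, hcard.trans ?_⟩
  set B := (k₁.choose ⌈β * k₁⌉₊ : ℝ)⁻¹ * √k ^ ⌈β * k₁⌉₊ * exp ((k₀ + k₁) / √k)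
  calc _ = B * ((k * log n + 1) * exp (3 / 4)) := by rw [exp_add]; ring
    _ ≤ B * ((k * log (2 * c * k ^ 3) + 1) * exp (3 / 4)) := by gcongr
    _ ≤ B * (8 * k * log (c * k)) := by gcongr
    _ = _ := by ring
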